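/- arXiv:1208.2573 — 4 statements merged into one kernel-verified Lean document; each statement's English description precedes it below -/
import Mathlib

section
/- Let f : [a,b] → ℝ (a < b) be such that the derivative f′ is absolutely continuous on [a,b]. Then for all x ∈ [a, (a+b)/2] the identity (1/(b−a))∫_a^b f(t) dt − (1/2)[f(x) + f(a+b−x)] + (1/2)(x − (3a+b)/4)[f′(x) − f′(a+b−x)] = (1/(2(b−a)))[∫_a^x (t−a)² f″(t) dt + ∫_x^{a+b−x} (t − (a+b)/2)² f″(t) dt + ∫_{a+b−x}^b (t−b)² f″(t) dt] holds. -/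
/-!
Integrating `(t - c) ^ 2 * f'' t` by parts twice gives
`[(t - c) ^ 2 f' t - 2 (t - c) f t]` evaluated between the endpoints, plus `2 ∫ f`.
Apply this on `[a, x]`, `[x, a + b - x]` and `[a + b - x, b]` with `c` equal to `a`, the midpoint
and `b`: the three `∫ f` add up to `∫_a^b f`, the `(t - c) ^ 2 f'` terms vanish at `a` and `b`,
and the remaining boundary terms at `x` and `a + b - x` combine into the left-hand side.
-/

open MeasureTheory Set

theorem intervalIntegrable_of_hasDerivAt {g g' : ℝ → ℝ} {p q : ℝ}
    (h : ∀ t ∈ uIcc p q, HasDerivAt g (g' t) t) : IntervalIntegrable g volume p q :=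
  ContinuousOn.intervalIntegrable fun t ht => (h t ht).continuousAt.continuousWithinAt

theorem integral_sq_sub_mul_deriv_deriv {f f' f'' : ℝ → ℝ} {p q : ℝ} (c : ℝ)
    (hf : ∀ t ∈ uIcc p q, HasDerivAt f (f' t) t)
    (hf' : ∀ t ∈ uIcc p q, HasDerivAt f' (f'' t) t)
    (hf''_int : IntervalIntegrable f'' volume p q) :
    ∫ t in p..q, (t - c) ^ 2 * f'' t
      = (q - c) ^ 2 * f' q - (p - c) ^ 2 * f' p
        - (2 * (q - c) * f q - 2 * (p - c) * f p) + 2 * ∫ t in p..q, f t := by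
  have hsq : ∀ t ∈ uIcc p q, HasDerivAt (fun s => (s - c) ^ 2) (2 * (t - c)) t := fun t _ => by
    simpa using ((hasDerivAt_id t).sub_const c).fun_pow 2
  have hlin : ∀ t ∈ uIcc p q, HasDerivAt (fun s => 2 * (s - c)) 2 t := fun t _ => by
    simpa using ((hasDerivAt_id t).sub_const c).const_mul 2
  rw [intervalIntegral.integral_mul_deriv_eq_deriv_mul hsq hf'
      ((by fun_prop : Continuous fun t => 2 * (t - c)).intervalIntegrable p q) hf''_int,
    intervalIntegral.integral_mul_deriv_eq_deriv_mul hlin hf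
      intervalIntegrable_const (intervalIntegrable_of_hasDerivAt hf'),
    intervalIntegral.integral_const_mul]
  ring

theorem stmt0 (a b : ℝ) (hab : a < b) (f f' f'' : ℝ → ℝ)
    (hf' : ∀ t ∈ Set.Icc a b, HasDerivAt f (f' t) t)
    (hf'' : ∀ t ∈ Set.Icc a b, HasDerivAt f' (f'' t) t)
    (hint : IntervalIntegrable f'' volume a b) :
    ∀ x ∈ Set.Icc a ((a + b) / 2),
      ((1 / (b - a)) * ∫ t in a..b, f t) - (1 / 2) * (f x + f (a + b - x))
          + (1 / 2) * (x - (3 * a + b) / 4) * (f' x - f' (a + b - x))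
        = (1 / (2 * (b - a))) *
            ((∫ t in a..x, (t - a) ^ 2 * f'' t)
              + (∫ t in x..(a + b - x), (t - (a + b) / 2) ^ 2 * f'' t)
              + (∫ t in (a + b - x)..b, (t - b) ^ 2 * f'' t)) := by
  rintro x ⟨hax, hxm⟩
  rw [← uIcc_of_le hab.le] at hf' hf''
  have ha : a ∈ uIcc a b := left_mem_uIcc
  have hb : b ∈ uIcc a b := right_mem_uIcc
  have hx : x ∈ uIcc a b := mem_uIcc_of_le hax (by linarith)
  have hy : a + b - x ∈ uIcc a b := mem_uIcc_of_le (by linarith) (by linarith)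
  have ibp : ∀ {p q}, p ∈ uIcc a b → q ∈ uIcc a b → ∀ c, _ := fun hp hq c =>
    integral_sq_sub_mul_deriv_deriv c (fun t ht => hf' t (uIcc_subset_uIcc hp hq ht))
      (fun t ht => hf'' t (uIcc_subset_uIcc hp hq ht)) (hint.mono_set (uIcc_subset_uIcc hp hq))
  have hf_int : ∀ {p q}, p ∈ uIcc a b → q ∈ uIcc a b → IntervalIntegrable f volume p q :=
    fun hp hq => intervalIntegrable_of_hasDerivAt fun t ht => hf' t (uIcc_subset_uIcc hp hq ht)
  rw [ibp ha hx a, ibp hx hy ((a + b) / 2), ibp hy hb b,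
    ← intervalIntegral.integral_add_adjacent_intervals (hf_int ha hx) (hf_int hx hb),
    ← intervalIntegral.integral_add_adjacent_intervals (hf_int hx hy) (hf_int hy hb)]
  field_simp [(sub_pos.2 hab).ne']
  ring
end

section
/- Let f : [a,b] → ℝ (a < b) be such that f′ is absolutely continuous on [a,b] and f″ ∈ L¹[a,b]. If |f″| is s-convex in the second sense on [a,b] for some fixed s ∈ (0,1], then for all x ∈ [a, (a+b)/2]: |(1/(b−a))∫_a^b f(t) dt − (1/2)[f(x)+f(a+b−x)] + (1/2)(x − (3a+b)/4)[f′(x) − f′(a+b−x)]| ≤ ((x−a)³/((s+1)(s+2)(s+3)(b−a)))[|f″(a)| + |f″(b)|] + ((4(s²+3s+2)(x−a)³ + (s²+s+2)(a+b−2x)³)/(8(s+1)(s+2)(s+3)(b−a)))[|f″(x)| + |f″(a+b−x)|]. -/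
open MeasureTheory

def SConvexOn (s : ℝ) (D : Set ℝ) (g : ℝ → ℝ) : Prop :=
  ∀ x ∈ D, ∀ y ∈ D, ∀ α β : ℝ, 0 ≤ α → 0 ≤ β → α + β = 1 →
    g (α * x + β * y) ≤ α ^ s * g x + β ^ s * g y

open Set intervalIntegral

/-!
Integrating by parts twice against the kernel equal to `(t - a)²` on `[a, x]`,
`(t - (a + b) / 2)²` on `[x, a + b - x]` and `(t - b)²` on `[a + b - x, b]` writes the left-hand
side as `(2 (b - a))⁻¹ ∫ K f''`. On each of the three pieces `[c, d]`, `s`-convexity bounds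
`|f'' t|` by `((d - t) / (d - c))^s |f'' c| + ((t - c) / (d - c))^s |f'' d|`, and the resulting
weighted moments of the kernel are computed in closed form.
-/

theorem SConvexOn.mono {s : ℝ} {D E : Set ℝ} {g : ℝ → ℝ} (hg : SConvexOn s D g) (hED : E ⊆ D) :
    SConvexOn s E g :=
  fun x hx y hy => hg x (hED hx) y (hED hy)

/-- `∫ u in 0..h, (u + p) ^ 2 * (u / h) ^ s` for `0 < h`. -/
noncomputable def sqRpowMoment (s p h : ℝ) : ℝ :=
  p ^ 2 * h / (s + 1) + 2 * p * h ^ 2 / (s + 2) + h ^ 3 / (s + 3)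

theorem integral_sq_sub_mul_rpow_sub_left {s : ℝ} (hs : 0 ≤ s) {c d : ℝ} (hcd : c ≤ d) (m : ℝ) :
    ∫ t in c..d, (t - m) ^ 2 * (t - c) ^ s = (d - c) ^ s * sqRpowMoment s (c - m) (d - c) := by
  have hs1 : s + 1 ≠ 0 := by positivity
  have hs2 : s + 2 ≠ 0 := by positivity
  have hs3 : s + 3 ≠ 0 := by positivity
  set F : ℝ → ℝ := fun t => (t - c) ^ (s + 1) *
    ((c - m) ^ 2 / (s + 1) + 2 * (c - m) * (t - c) / (s + 2) + (t - c) ^ 2 / (s + 3))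
  have hF : ∀ t ∈ uIcc c d, HasDerivAt F ((t - m) ^ 2 * (t - c) ^ s) t := by
    intro t ht
    have hct : 0 ≤ t - c := by rw [uIcc_of_le hcd] at ht; linarith [ht.1]
    have hu : HasDerivAt (fun t => t - c) 1 t := (hasDerivAt_id' t).sub_const c
    have hpow : HasDerivAt (fun t => (t - c) ^ (s + 1)) (1 * (s + 1) * (t - c) ^ (s + 1 - 1)) t :=
      hu.rpow_const (Or.inr (by linarith))
    have hpoly := (((hu.const_mul (2 * (c - m))).div_const (s + 2)).const_add
      ((c - m) ^ 2 / (s + 1))).add ((hu.fun_pow 2).div_const (s + 3))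
    refine (hpow.mul hpoly).congr_deriv ?_
    rw [add_sub_cancel_right, Real.rpow_add_one' hct hs1]
    simp only [Pi.add_apply]
    push_cast
    field_simp
    ring
  have hcont : ContinuousOn (fun t => (t - m) ^ 2 * (t - c) ^ s) (uIcc c d) :=
    (Continuous.continuousOn (by fun_prop)).mul
      ((continuous_id.sub continuous_const).continuousOn.rpow_const fun _ _ => Or.inr hs)
  rw [integral_eq_sub_of_hasDerivAt hF hcont.intervalIntegrable, sqRpowMoment]
  simp only [F, sub_self, Real.zero_rpow hs1, zero_mul, sub_zero,
    Real.rpow_add_one' (sub_nonneg.2 hcd) hs1]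
  field_simp

theorem integral_sq_sub_mul_rpow_sub_right {s : ℝ} (hs : 0 ≤ s) {c d : ℝ} (hcd : c ≤ d) (m : ℝ) :
    ∫ t in c..d, (t - m) ^ 2 * (d - t) ^ s = (d - c) ^ s * sqRpowMoment s (m - d) (d - c) := by
  have hreflect := integral_comp_sub_left (fun t => (t - (c + d - m)) ^ 2 * (t - c) ^ s) (c + d)
    (a := c) (b := d)
  simp only [add_sub_cancel_right, add_sub_cancel_left, sub_sub_sub_cancel_left] at hreflect
  rw [integral_sq_sub_mul_rpow_sub_left hs hcd, show c - (c + d - m) = m - d by ring] at hreflect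
  rw [← hreflect]
  congr 1 with t
  ring_nf

theorem SConvexOn.le_of_mem_Icc {s c d t : ℝ} {g : ℝ → ℝ} (hg : SConvexOn s (Icc c d) g)
    (hcd : c < d) (ht : t ∈ Icc c d) :
    g t ≤ ((d - t) / (d - c)) ^ s * g c + ((t - c) / (d - c)) ^ s * g d := by
  have hdc : 0 < d - c := sub_pos.2 hcd
  have hcomb : (d - t) / (d - c) * c + (t - c) / (d - c) * d = t := by
    field_simp
    ring
  have h := hg c (left_mem_Icc.2 hcd.le) d (right_mem_Icc.2 hcd.le) ((d - t) / (d - c))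
    ((t - c) / (d - c)) (div_nonneg (by linarith [ht.2]) hdc.le)
    (div_nonneg (by linarith [ht.1]) hdc.le) (by field_simp; ring)
  rwa [hcomb] at h

theorem abs_integral_mul_le_of_sConvexOn {s c d : ℝ} (hs : 0 ≤ s) (hcd : c ≤ d) {w g : ℝ → ℝ}
    (hw : ContinuousOn w (Icc c d)) (hw0 : ∀ t ∈ Icc c d, 0 ≤ w t)
    (hg : IntervalIntegrable g volume c d) (hconv : SConvexOn s (Icc c d) fun t => |g t|) :
    |∫ t in c..d, w t * g t| ≤ |g c| * (∫ t in c..d, w t * ((d - t) / (d - c)) ^ s)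
      + |g d| * ∫ t in c..d, w t * ((t - c) / (d - c)) ^ s := by
  rcases hcd.eq_or_lt with rfl | hcd
  · simp
  have hw' : ContinuousOn w (uIcc c d) := by rwa [uIcc_of_le hcd.le]
  have hweight (u : ℝ → ℝ) (hu : Continuous u) :
      IntervalIntegrable (fun t => w t * (u t / (d - c)) ^ s) volume c d :=
    (hw'.mul ((hu.div_const _).continuousOn.rpow_const fun _ _ => Or.inr hs)).intervalIntegrable
  rw [← intervalIntegral.integral_const_mul, ← intervalIntegral.integral_const_mul,
    ← intervalIntegral.integral_add
    ((hweight _ (by fun_prop)).const_mul _) ((hweight _ (by fun_prop)).const_mul _)]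
  calc |∫ t in c..d, w t * g t| ≤ ∫ t in c..d, |w t * g t| := abs_integral_le_integral_abs hcd.le
    _ ≤ _ := by
      refine integral_mono_on hcd.le (hg.continuousOn_mul hw').abs
        (((hweight _ (by fun_prop)).const_mul _).add ((hweight _ (by fun_prop)).const_mul _))
        fun t ht => ?_
      rw [abs_mul, abs_of_nonneg (hw0 t ht)]
      have := mul_le_mul_of_nonneg_left (hconv.le_of_mem_Icc hcd ht) (hw0 t ht)
      linarith

theorem abs_integral_sq_sub_mul_le_of_sConvexOn {s c d : ℝ} (hs : 0 ≤ s) (hcd : c ≤ d) (m : ℝ)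
    {g : ℝ → ℝ} (hg : IntervalIntegrable g volume c d)
    (hconv : SConvexOn s (Icc c d) fun t => |g t|) :
    |∫ t in c..d, (t - m) ^ 2 * g t|
      ≤ |g c| * sqRpowMoment s (m - d) (d - c) + |g d| * sqRpowMoment s (c - m) (d - c) := by
  rcases hcd.eq_or_lt with rfl | hcd
  · simp [sqRpowMoment]
  have hdc : 0 < d - c := sub_pos.2 hcd
  have hnormalize (u : ℝ → ℝ) (hu : ∀ t ∈ Icc c d, 0 ≤ u t) :
      ∫ t in c..d, (t - m) ^ 2 * (u t / (d - c)) ^ s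
        = (∫ t in c..d, (t - m) ^ 2 * u t ^ s) / (d - c) ^ s := by
    rw [← intervalIntegral.integral_div]
    refine intervalIntegral.integral_congr fun t ht => ?_
    rw [uIcc_of_le hcd.le] at ht
    simp only [Real.div_rpow (hu t ht) hdc.le, mul_div_assoc]
  have hpow_ne : (d - c) ^ s ≠ 0 := (Real.rpow_pos_of_pos hdc s).ne'
  refine (abs_integral_mul_le_of_sConvexOn hs hcd.le (by fun_prop) (fun t _ => sq_nonneg _) hg
    hconv).trans_eq ?_
  rw [hnormalize _ fun t ht => sub_nonneg.2 ht.2, hnormalize _ fun t ht => sub_nonneg.2 ht.1,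
    integral_sq_sub_mul_rpow_sub_right hs hcd.le, integral_sq_sub_mul_rpow_sub_left hs hcd.le,
    mul_div_cancel_left₀ _ hpow_ne, mul_div_cancel_left₀ _ hpow_ne]

theorem integral_sq_sub_mul_eq_of_hasDerivAt {f f' f'' : ℝ → ℝ} {c d : ℝ}
    (hf : ∀ t ∈ uIcc c d, HasDerivAt f (f' t) t) (hf' : ∀ t ∈ uIcc c d, HasDerivAt f' (f'' t) t)
    (hf'' : IntervalIntegrable f'' volume c d) (m : ℝ) :
    ∫ t in c..d, (t - m) ^ 2 * f'' t
      = (d - m) ^ 2 * f' d - (c - m) ^ 2 * f' c - 2 * ((d - m) * f d - (c - m) * f c)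
        + 2 * ∫ t in c..d, f t := by
  have hsq (t : ℝ) : HasDerivAt (fun t => (t - m) ^ 2) (2 * (t - m)) t := by
    simpa using ((hasDerivAt_id' t).sub_const m).fun_pow 2
  have hlin (t : ℝ) : HasDerivAt (fun t => 2 * (t - m)) 2 t := by
    simpa using ((hasDerivAt_id' t).sub_const m).const_mul 2
  have hf'_cont : ContinuousOn f' (uIcc c d) :=
    fun t ht => (hf' t ht).continuousAt.continuousWithinAt
  rw [intervalIntegral.integral_mul_deriv_eq_deriv_mul (fun t _ => hsq t) hf'
      (Continuous.intervalIntegrable (by fun_prop) _ _) hf'',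
    intervalIntegral.integral_mul_deriv_eq_deriv_mul (fun t _ => hlin t) hf
      intervalIntegrable_const hf'_cont.intervalIntegrable,
    intervalIntegral.integral_const_mul]
  ring

theorem integral_sub_two_point_eq_sum_integral_sq_mul {a b x : ℝ} {f f' f'' : ℝ → ℝ}
    (hab : a < b) (hx : x ∈ Icc a ((a + b) / 2))
    (hf : ∀ t ∈ Icc a b, HasDerivAt f (f' t) t) (hf' : ∀ t ∈ Icc a b, HasDerivAt f' (f'' t) t)
    (hf'' : IntervalIntegrable f'' volume a b) :
    (1 / (b - a)) * (∫ t in a..b, f t) - (1 / 2) * (f x + f (a + b - x))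
        + (1 / 2) * (x - (3 * a + b) / 4) * (f' x - f' (a + b - x))
      = ((∫ t in a..x, (t - a) ^ 2 * f'' t) + (∫ t in x..a + b - x, (t - (a + b) / 2) ^ 2 * f'' t)
          + ∫ t in a + b - x..b, (t - b) ^ 2 * f'' t) / (2 * (b - a)) := by
  obtain ⟨hax, hxm⟩ := hx
  have hsub {c d : ℝ} (hac : a ≤ c) (hcd : c ≤ d) (hdb : d ≤ b) : uIcc c d ⊆ Icc a b := by
    rw [uIcc_of_le hcd]
    exact Icc_subset_Icc hac hdb
  have hf_cont : ContinuousOn f (Icc a b) := fun t ht => (hf t ht).continuousAt.continuousWithinAt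
  have hf_int {c d : ℝ} (hac : a ≤ c) (hcd : c ≤ d) (hdb : d ≤ b) :
      IntervalIntegrable f volume c d :=
    (hf_cont.mono (hsub hac hcd hdb)).intervalIntegrable
  have hparts {c d : ℝ} (hac : a ≤ c) (hcd : c ≤ d) (hdb : d ≤ b) (m : ℝ) :=
    integral_sq_sub_mul_eq_of_hasDerivAt (fun t ht => hf t (hsub hac hcd hdb ht))
      (fun t ht => hf' t (hsub hac hcd hdb ht))
      (hf''.mono_set (by rw [uIcc_of_le hab.le]; exact hsub hac hcd hdb)) m
  rw [hparts le_rfl hax (by linarith) a, hparts hax (by linarith) (by linarith) ((a + b) / 2),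
    hparts (by linarith) (by linarith) le_rfl b,
    ← intervalIntegral.integral_add_adjacent_intervals
      (hf_int (d := a + b - x) le_rfl (by linarith) (by linarith))
      (hf_int (by linarith) (by linarith) le_rfl),
    ← intervalIntegral.integral_add_adjacent_intervals (hf_int le_rfl hax (by linarith))
      (hf_int (d := a + b - x) hax (by linarith) (by linarith))]
  have hba : b - a ≠ 0 := sub_ne_zero.2 hab.ne'
  field_simp
  ring

theorem stmt1_general (a b : ℝ) (hab : a < b) (f f' f'' : ℝ → ℝ)
    (hf' : ∀ t ∈ Set.Icc a b, HasDerivAt f (f' t) t)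
    (hf'' : ∀ t ∈ Set.Icc a b, HasDerivAt f' (f'' t) t)
    (hint : IntervalIntegrable f'' volume a b)
    (s : ℝ) (hs0 : 0 < s)
    (hconv : SConvexOn s (Set.Icc a b) (fun t => |f'' t|)) :
    ∀ x ∈ Set.Icc a ((a + b) / 2),
      |((1 / (b - a)) * ∫ t in a..b, f t) - (1 / 2) * (f x + f (a + b - x))
          + (1 / 2) * (x - (3 * a + b) / 4) * (f' x - f' (a + b - x))|
        ≤ (x - a) ^ 3 / ((s + 1) * (s + 2) * (s + 3) * (b - a)) * (|f'' a| + |f'' b|)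
          + (4 * (s ^ 2 + 3 * s + 2) * (x - a) ^ 3 + (s ^ 2 + s + 2) * (a + b - 2 * x) ^ 3)
              / (8 * (s + 1) * (s + 2) * (s + 3) * (b - a)) * (|f'' x| + |f'' (a + b - x)|) := by
  intro x hx
  obtain ⟨hax, hxm⟩ := hx
  have hpiece {c d : ℝ} (hac : a ≤ c) (hcd : c ≤ d) (hdb : d ≤ b) (m : ℝ) :=
    abs_integral_sq_sub_mul_le_of_sConvexOn hs0.le hcd m
      (hint.mono_set (by rw [uIcc_of_le hab.le, uIcc_of_le hcd]; exact Icc_subset_Icc hac hdb))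
      (hconv.mono (Icc_subset_Icc hac hdb))
  have hpos : 0 < 2 * (b - a) := by linarith
  rw [integral_sub_two_point_eq_sum_integral_sq_mul hab ⟨hax, hxm⟩ hf' hf'' hint, abs_div,
    abs_of_pos hpos, div_le_iff₀ hpos]
  refine (norm_add₃_le (E := ℝ)).trans <| (add_le_add_three (hpiece le_rfl hax (by linarith) a)
    (hpiece (d := a + b - x) hax (by linarith) (by linarith) ((a + b) / 2))
    (hpiece (by linarith) (by linarith) le_rfl b)).trans_eq ?_
  have : s + 1 ≠ 0 := by positivity
  have : s + 2 ≠ 0 := by positivity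
  have : s + 3 ≠ 0 := by positivity
  have : b - a ≠ 0 := (sub_pos.2 hab).ne'
  simp only [sqRpowMoment]
  field_simp
  ring

theorem stmt1 (a b : ℝ) (ha : 0 ≤ a) (hab : a < b) (f f' f'' : ℝ → ℝ)
    (hf' : ∀ t ∈ Set.Icc a b, HasDerivAt f (f' t) t)
    (hf'' : ∀ t ∈ Set.Icc a b, HasDerivAt f' (f'' t) t)
    (hint : IntervalIntegrable f'' volume a b)
    (s : ℝ) (hs0 : 0 < s) (hs1 : s ≤ 1)
    (hconv : SConvexOn s (Set.Icc a b) (fun t => |f'' t|)) :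
    ∀ x ∈ Set.Icc a ((a + b) / 2),
      |((1 / (b - a)) * ∫ t in a..b, f t) - (1 / 2) * (f x + f (a + b - x))
          + (1 / 2) * (x - (3 * a + b) / 4) * (f' x - f' (a + b - x))|
        ≤ (x - a) ^ 3 / ((s + 1) * (s + 2) * (s + 3) * (b - a)) * (|f'' a| + |f'' b|)
          + (4 * (s ^ 2 + 3 * s + 2) * (x - a) ^ 3 + (s ^ 2 + s + 2) * (a + b - 2 * x) ^ 3)
              / (8 * (s + 1) * (s + 2) * (s + 3) * (b - a)) * (|f'' x| + |f'' (a + b - x)|) :=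
  stmt1_general a b hab f f' f'' hf' hf'' hint s hs0 hconv
end

section
/- Let f : [a,b] → ℝ (a < b) be such that f′ is absolutely continuous on [a,b] and f″ ∈ L¹[a,b]. If |f″|^q is s-convex in the second sense on [a,b] for some fixed s ∈ (0,1], where q > 1 and 1/p + 1/q = 1, then for all x ∈ [a, (a+b)/2]: |(1/(b−a))∫_a^b f(t) dt − (1/2)[f(x)+f(a+b−x)] + (1/2)(x − (3a+b)/4)[f′(x) − f′(a+b−x)]| ≤ (1/(2(b−a)(2p+1)^{1/p}(s+1)^{1/q}))[(x−a)³(|f″(a)|^q + |f″(x)|^q)^{1/q} + ((a+b−2x)³/4)(|f″(x)|^q + |f″(a+b−x)|^q)^{1/q} + (x−a)³(|f″(a+b−x)|^q + |f″(b)|^q)^{1/q}]. -/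
/-!
Integrating by parts twice against the piecewise quadratic kernel equal to `(t - a)²`,
`(t - (a + b) / 2)²` and `(t - b)²` on `[a, x]`, `[x, a + b - x]` and `[a + b - x, b]` turns
the left-hand side into `1 / (2 (b - a))` times `∫ K f''`. On each piece Hölder's inequality
separates the kernel from `f''`, and the `q`-th power of `|f''|` is integrated through the
Hermite–Hadamard inequality for `s`-convex functions, `∫ᵤᵛ G ≤ (v - u) / (s + 1) · (G u + G v)`,
which comes from integrating the pointwise bound
`G t ≤ ((v - t) / (v - u))ˢ G u + ((t - u) / (v - u))ˢ G v`.
-/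

open MeasureTheory

open Set Real

theorem integral_sub_sq_mul_eq {f f' f'' : ℝ → ℝ} {u v : ℝ} (c : ℝ)
    (hf' : ∀ t ∈ uIcc u v, HasDerivAt f (f' t) t)
    (hf'' : ∀ t ∈ uIcc u v, HasDerivAt f' (f'' t) t)
    (hint : IntervalIntegrable f'' volume u v) :
    ∫ t in u..v, (t - c) ^ 2 * f'' t
      = (v - c) ^ 2 * f' v - (u - c) ^ 2 * f' u
        - 2 * ((v - c) * f v - (u - c) * f u) + 2 * ∫ t in u..v, f t := by
  have hf'_int : IntervalIntegrable f' volume u v :=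
    ContinuousOn.intervalIntegrable fun t ht => (hf'' t ht).continuousAt.continuousWithinAt
  have parts₂ := intervalIntegral.integral_mul_deriv_eq_deriv_mul
    (u := fun t => (t - c) ^ 2) (u' := fun t => 2 * (t - c))
    (fun t _ => by simpa using ((hasDerivAt_id t).sub_const c).fun_pow 2) hf''
    ((by fun_prop : Continuous fun t : ℝ => 2 * (t - c)).intervalIntegrable u v) hint
  have parts₁ := intervalIntegral.integral_mul_deriv_eq_deriv_mul
    (u := fun t => t - c) (u' := fun _ => 1)
    (fun t _ => (hasDerivAt_id t).sub_const c) hf' intervalIntegrable_const hf'_int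
  simp only [one_mul, mul_assoc, intervalIntegral.integral_const_mul] at parts₁ parts₂
  rw [parts₂, parts₁]
  ring

theorem three_point_kernel_identity {a b x : ℝ} {f f' f'' : ℝ → ℝ} (hab : a < b)
    (hax : a ≤ x) (hxm : x ≤ (a + b) / 2)
    (hf' : ∀ t ∈ Icc a b, HasDerivAt f (f' t) t)
    (hf'' : ∀ t ∈ Icc a b, HasDerivAt f' (f'' t) t)
    (hint : IntervalIntegrable f'' volume a b) :
    ((1 / (b - a)) * ∫ t in a..b, f t) - (1 / 2) * (f x + f (a + b - x))
        + (1 / 2) * (x - (3 * a + b) / 4) * (f' x - f' (a + b - x))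
      = 1 / (2 * (b - a)) * ((∫ t in a..x, (t - a) ^ 2 * f'' t)
          + (∫ t in x..(a + b - x), (t - (a + b) / 2) ^ 2 * f'' t)
          + ∫ t in (a + b - x)..b, (t - b) ^ 2 * f'' t) := by
  have hI : uIcc a b = Icc a b := uIcc_of_le hab.le
  have sub : ∀ {u v}, u ∈ Icc a b → v ∈ Icc a b → uIcc u v ⊆ Icc a b := fun hu hv =>
    hI ▸ uIcc_subset_uIcc (hI ▸ hu) (hI ▸ hv)
  have ha : a ∈ Icc a b := left_mem_Icc.2 hab.le
  have hb : b ∈ Icc a b := right_mem_Icc.2 hab.le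
  have hx : x ∈ Icc a b := ⟨hax, by linarith⟩
  have hy : a + b - x ∈ Icc a b := ⟨by linarith, by linarith⟩
  have parts {u v} (hu : u ∈ Icc a b) (hv : v ∈ Icc a b) (c : ℝ) :=
    integral_sub_sq_mul_eq c (fun t ht => hf' t (sub hu hv ht))
      (fun t ht => hf'' t (sub hu hv ht)) (hint.mono_set (hI ▸ sub hu hv))
  have hf_int : ∀ {u v}, u ∈ Icc a b → v ∈ Icc a b → IntervalIntegrable f volume u v :=
    fun hu hv => ContinuousOn.intervalIntegrable fun t ht =>
      (hf' t (sub hu hv ht)).continuousAt.continuousWithinAt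
  rw [parts ha hx, parts hx hy, parts hy hb,
    ← intervalIntegral.integral_add_adjacent_intervals (hf_int ha hy) (hf_int hy hb),
    ← intervalIntegral.integral_add_adjacent_intervals (hf_int ha hx) (hf_int hx hy)]
  have : b - a ≠ 0 := by linarith
  field_simp
  ring

theorem SConvexOn.le_interpolant {s : ℝ} {D : Set ℝ} {G : ℝ → ℝ} (hG : SConvexOn s D G)
    {u v t : ℝ} (hu : u ∈ D) (hv : v ∈ D) (ht : t ∈ Icc u v) (huv : u < v) :
    G t ≤ ((v - t) / (v - u)) ^ s * G u + ((t - u) / (v - u)) ^ s * G v := by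
  have hvu : 0 < v - u := by linarith
  have ht' : (v - t) / (v - u) * u + (t - u) / (v - u) * v = t := by field_simp; ring
  have := hG u hu v hv ((v - t) / (v - u)) ((t - u) / (v - u))
    (div_nonneg (by linarith [ht.2]) hvu.le) (div_nonneg (by linarith [ht.1]) hvu.le)
    (by field_simp; ring)
  rwa [ht'] at this

theorem integral_div_sub_rpow {s u v : ℝ} (hs : -1 < s) (huv : u < v) :
    ∫ t in u..v, ((t - u) / (v - u)) ^ s = (v - u) / (s + 1) := by
  have hvu : v - u ≠ 0 := by linarith
  simp only [sub_div]
  rw [intervalIntegral.integral_comp_div_sub (fun t => t ^ s) hvu, sub_self, ← sub_div,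
    div_self hvu, integral_rpow (Or.inl hs), one_rpow, zero_rpow (by linarith), smul_eq_mul]
  ring

theorem integral_sub_div_rpow {s u v : ℝ} (hs : -1 < s) (huv : u < v) :
    ∫ t in u..v, ((v - t) / (v - u)) ^ s = (v - u) / (s + 1) := by
  have := intervalIntegral.integral_comp_sub_left (fun t => ((t - u) / (v - u)) ^ s)
    (a := u) (b := v) (u + v)
  simp only [add_sub_cancel_left, add_sub_cancel_right] at this
  rw [← integral_div_sub_rpow hs huv, ← this]
  congr with t
  ring_nf

theorem continuous_interpolant {s : ℝ} (hs : 0 ≤ s) (u v A B : ℝ) :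
    Continuous fun t => ((v - t) / (v - u)) ^ s * A + ((t - u) / (v - u)) ^ s * B := by
  have := continuous_rpow_const hs
  fun_prop

section HermiteHadamard

variable {s u v : ℝ} {D : Set ℝ} {G : ℝ → ℝ}

theorem SConvexOn.intervalIntegrable (hG : SConvexOn s D G) (hs : 0 ≤ s) (hu : u ∈ D)
    (hv : v ∈ D) (huv : u < v) (hG0 : ∀ t ∈ Icc u v, 0 ≤ G t)
    (hmeas : AEStronglyMeasurable G (volume.restrict (Ioc u v))) :
    IntervalIntegrable G volume u v := by
  rw [intervalIntegrable_iff_integrableOn_Ioc_of_le huv.le]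
  refine (continuous_interpolant hs u v (G u) (G v)).integrableOn_Ioc.mono' hmeas ?_
  filter_upwards [ae_restrict_mem measurableSet_Ioc] with t ht
  rw [norm_of_nonneg (hG0 t (Ioc_subset_Icc_self ht))]
  exact hG.le_interpolant hu hv (Ioc_subset_Icc_self ht) huv

theorem SConvexOn.integral_le (hG : SConvexOn s D G) (hs : 0 ≤ s) (hu : u ∈ D)
    (hv : v ∈ D) (huv : u < v) (hG0 : ∀ t ∈ Icc u v, 0 ≤ G t)
    (hmeas : AEStronglyMeasurable G (volume.restrict (Ioc u v))) :
    ∫ t in u..v, G t ≤ (v - u) / (s + 1) * (G u + G v) := by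
  have hs' : -1 < s := by linarith
  have hc (A : ℝ) := continuous_interpolant hs u v A 0
  have hc' (B : ℝ) := continuous_interpolant hs u v 0 B
  simp only [mul_zero, add_zero, zero_add] at hc hc'
  calc ∫ t in u..v, G t
      ≤ ∫ t in u..v, (((v - t) / (v - u)) ^ s * G u + ((t - u) / (v - u)) ^ s * G v) :=
        intervalIntegral.integral_mono_on huv.le
          (hG.intervalIntegrable hs hu hv huv hG0 hmeas)
          ((continuous_interpolant hs u v _ _).intervalIntegrable _ _)
          fun t ht => hG.le_interpolant hu hv ht huv
    _ = (v - u) / (s + 1) * (G u + G v) := by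
        rw [intervalIntegral.integral_add ((hc _).intervalIntegrable _ _)
            ((hc' _).intervalIntegrable _ _),
          intervalIntegral.integral_mul_const, intervalIntegral.integral_mul_const,
          integral_sub_div_rpow hs' huv, integral_div_sub_rpow hs' huv]
        ring

end HermiteHadamard

theorem intervalIntegral_mul_le_rpow_mul_rpow {p q u v : ℝ} (hpq : p.HolderConjugate q)
    (huv : u ≤ v) {f g : ℝ → ℝ} (hf0 : ∀ t, 0 ≤ f t) (hg0 : ∀ t, 0 ≤ g t)
    (hfm : AEStronglyMeasurable f (volume.restrict (Ioc u v)))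
    (hgm : AEStronglyMeasurable g (volume.restrict (Ioc u v)))
    (hf : IntervalIntegrable (fun t => f t ^ p) volume u v)
    (hg : IntervalIntegrable (fun t => g t ^ q) volume u v) :
    ∫ t in u..v, f t * g t
      ≤ (∫ t in u..v, f t ^ p) ^ (1 / p) * (∫ t in u..v, g t ^ q) ^ (1 / q) := by
  have memLp : ∀ {h : ℝ → ℝ} {r : ℝ}, 0 < r → (∀ t, 0 ≤ h t) →
      AEStronglyMeasurable h (volume.restrict (Ioc u v)) →
      IntervalIntegrable (fun t => h t ^ r) volume u v →
      MemLp h (ENNReal.ofReal r) (volume.restrict (Ioc u v)) := by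
    intro h r hr h0 hm hi
    rw [← integrable_norm_rpow_iff hm (by simpa using hr) ENNReal.ofReal_ne_top,
      ENNReal.toReal_ofReal hr.le]
    simp_rw [norm_of_nonneg (h0 _)]
    exact (intervalIntegrable_iff_integrableOn_Ioc_of_le huv).1 hi
  simp only [intervalIntegral.integral_of_le huv]
  exact integral_mul_le_Lp_mul_Lq_of_nonneg hpq (.of_forall hf0) (.of_forall hg0)
    (memLp hpq.pos hf0 hfm hf) (memLp hpq.symm.pos hg0 hgm hg)

theorem integral_abs_sub_rpow {r u v c : ℝ} (hr : 0 ≤ r) (huc : u ≤ c) (hcv : c ≤ v) :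
    ∫ t in u..v, |t - c| ^ r = ((c - u) ^ (r + 1) + (v - c) ^ (r + 1)) / (r + 1) := by
  have hint : ∀ a b, IntervalIntegrable (fun t => |t - c| ^ r) volume a b := fun _ _ =>
    ((continuous_rpow_const hr).comp (by fun_prop)).intervalIntegrable _ _
  have left : ∫ t in u..c, |t - c| ^ r = ∫ t in u..c, (c - t) ^ r :=
    intervalIntegral.integral_congr fun t ht => by
      rw [uIcc_of_le huc] at ht
      rw [abs_sub_comm, abs_of_nonneg (by linarith [ht.2])]
  have right : ∫ t in c..v, |t - c| ^ r = ∫ t in c..v, (t - c) ^ r :=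
    intervalIntegral.integral_congr fun t ht => by
      rw [uIcc_of_le hcv] at ht
      rw [abs_of_nonneg (by linarith [ht.1])]
  rw [← intervalIntegral.integral_add_adjacent_intervals (hint u c) (hint c v), left, right,
    intervalIntegral.integral_comp_sub_left (fun t => t ^ r),
    intervalIntegral.integral_comp_sub_right (fun t => t ^ r), sub_self,
    integral_rpow (Or.inl (by linarith)), integral_rpow (Or.inl (by linarith)),
    zero_rpow (by linarith)]
  ring

theorem mul_rpow_mul_mul_rpow_eq {p q k X Y : ℝ} (hpq : p.HolderConjugate q) (hk : 0 ≤ k)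
    (hX : 0 ≤ X) (hY : 0 ≤ Y) :
    (k * X) ^ (1 / p) * (k * Y) ^ (1 / q) = k * (X ^ (1 / p) * Y ^ (1 / q)) := by
  have hk' : k ^ (1 / p) * k ^ (1 / q) = k := by
    rw [← rpow_add' hk (by rw [hpq.one_div_add_one_div]; norm_num),
      hpq.one_div_add_one_div, div_one, rpow_one]
  rw [mul_rpow hk hX, mul_rpow hk hY]
  linear_combination (X ^ (1 / p) * Y ^ (1 / q)) * hk'

theorem rpow_kernel_mul_rpow_eq {p q d A m : ℝ} (hpq : p.HolderConjugate q) (hd : 0 ≤ d)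
    (hA : 0 ≤ A) (hm : 0 ≤ m) :
    (d ^ (2 * p + 1) / (2 * p + 1)) ^ (1 / p) * (d * (A / m)) ^ (1 / q)
      = d ^ 3 / ((2 * p + 1) ^ (1 / p) * m ^ (1 / q)) * A ^ (1 / q) := by
  have hp := hpq.pos
  have hd3 : d ^ ((2 * p + 1) * (1 / p)) * d ^ (1 / q) = d ^ 3 := by
    have h3 : (2 * p + 1) * (1 / p) + 1 / q = 3 := by
      linear_combination 2 * mul_one_div_cancel hp.ne' + hpq.one_div_add_one_div
    rw [← rpow_add' hd (by rw [h3]; norm_num), h3]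
    norm_cast
  rw [div_rpow (rpow_nonneg hd _) (by linarith), ← rpow_mul hd, mul_rpow hd (div_nonneg hA hm),
    div_rpow hA hm, ← hd3]
  ring

section Pieces

variable {s p q u v c : ℝ} {D : Set ℝ} {g : ℝ → ℝ}

theorem abs_integral_sub_sq_mul_le (hs : 0 ≤ s) (hpq : p.HolderConjugate q)
    (hconv : SConvexOn s D fun t => |g t| ^ q) (hu : u ∈ D) (hv : v ∈ D) (huc : u ≤ c)
    (hcv : c ≤ v) (hg : IntervalIntegrable g volume u v) :
    |∫ t in u..v, (t - c) ^ 2 * g t|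
      ≤ (((c - u) ^ (2 * p + 1) + (v - c) ^ (2 * p + 1)) / (2 * p + 1)) ^ (1 / p)
        * ((v - u) * ((|g u| ^ q + |g v| ^ q) / (s + 1))) ^ (1 / q) := by
  rcases (huc.trans hcv).eq_or_lt with rfl | huv
  · obtain rfl : c = u := le_antisymm hcv huc
    simp [zero_rpow (inv_ne_zero hpq.symm.ne_zero)]
  have hp := hpq.pos
  have hmeas : AEStronglyMeasurable g (volume.restrict (Ioc u v)) := hg.1.aestronglyMeasurable
  have hG0 : ∀ t ∈ Icc u v, 0 ≤ |g t| ^ q := fun t _ => by positivity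
  have hGm : AEStronglyMeasurable (fun t => |g t| ^ q) (volume.restrict (Ioc u v)) :=
    ((continuous_rpow_const hpq.symm.nonneg).comp continuous_abs).comp_aestronglyMeasurable hmeas
  have kernel : ∀ t, ((t - c) ^ 2) ^ p = |t - c| ^ (2 * p) := fun t => by
    rw [← sq_abs, ← rpow_natCast, ← rpow_mul (abs_nonneg _)]
    norm_num
  have hker : Continuous fun t => |t - c| ^ (2 * p) :=
    (continuous_rpow_const (by positivity)).comp (by fun_prop)
  calc |∫ t in u..v, (t - c) ^ 2 * g t|
      ≤ ∫ t in u..v, (t - c) ^ 2 * |g t| := by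
        refine (intervalIntegral.abs_integral_le_integral_abs huv.le).trans_eq ?_
        exact intervalIntegral.integral_congr fun t _ => by simp only [abs_mul, abs_sq]
    _ ≤ (∫ t in u..v, ((t - c) ^ 2) ^ p) ^ (1 / p) * (∫ t in u..v, |g t| ^ q) ^ (1 / q) :=
        intervalIntegral_mul_le_rpow_mul_rpow hpq huv.le (f := fun t => (t - c) ^ 2)
          (fun t => sq_nonneg _) (fun t => abs_nonneg _) (by fun_prop) hmeas.norm
          (by simpa only [kernel] using hker.intervalIntegrable u v)
          (hconv.intervalIntegrable hs hu hv huv hG0 hGm)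
    _ ≤ _ := by
        simp only [kernel]
        rw [integral_abs_sub_rpow (by positivity) huc hcv]
        gcongr
        · exact intervalIntegral.integral_nonneg huv.le hG0
        · exact hpq.symm.one_div_nonneg
        · exact (hconv.integral_le hs hu hv huv hG0 hGm).trans_eq (by ring)

theorem abs_integral_sub_left_sq_mul_le (hs : 0 ≤ s) (hpq : p.HolderConjugate q)
    (hconv : SConvexOn s D fun t => |g t| ^ q) (hu : u ∈ D) (hv : v ∈ D) (huv : u ≤ v)
    (hg : IntervalIntegrable g volume u v) :
    |∫ t in u..v, (t - u) ^ 2 * g t|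
      ≤ (v - u) ^ 3 / ((2 * p + 1) ^ (1 / p) * (s + 1) ^ (1 / q))
        * (|g u| ^ q + |g v| ^ q) ^ (1 / q) := by
  have := abs_integral_sub_sq_mul_le hs hpq hconv hu hv le_rfl huv hg
  rwa [sub_self, zero_rpow (by linarith [hpq.pos]), zero_add,
    rpow_kernel_mul_rpow_eq hpq (sub_nonneg.2 huv) (by positivity) (by linarith)] at this

theorem abs_integral_sub_right_sq_mul_le (hs : 0 ≤ s) (hpq : p.HolderConjugate q)
    (hconv : SConvexOn s D fun t => |g t| ^ q) (hu : u ∈ D) (hv : v ∈ D) (huv : u ≤ v)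
    (hg : IntervalIntegrable g volume u v) :
    |∫ t in u..v, (t - v) ^ 2 * g t|
      ≤ (v - u) ^ 3 / ((2 * p + 1) ^ (1 / p) * (s + 1) ^ (1 / q))
        * (|g u| ^ q + |g v| ^ q) ^ (1 / q) := by
  have := abs_integral_sub_sq_mul_le hs hpq hconv hu hv huv le_rfl hg
  rwa [sub_self, zero_rpow (by linarith [hpq.pos]), add_zero,
    rpow_kernel_mul_rpow_eq hpq (sub_nonneg.2 huv) (by positivity) (by linarith)] at this

theorem abs_integral_sub_midpoint_sq_mul_le (hs : 0 ≤ s) (hpq : p.HolderConjugate q)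
    (hconv : SConvexOn s D fun t => |g t| ^ q) (hu : u ∈ D) (hv : v ∈ D) (huv : u ≤ v)
    (hg : IntervalIntegrable g volume u v) :
    |∫ t in u..v, (t - (u + v) / 2) ^ 2 * g t|
      ≤ (v - u) ^ 3 / 4 / ((2 * p + 1) ^ (1 / p) * (s + 1) ^ (1 / q))
        * (|g u| ^ q + |g v| ^ q) ^ (1 / q) := by
  have := abs_integral_sub_sq_mul_le hs hpq hconv hu hv (c := (u + v) / 2) (by linarith)
    (by linarith) hg
  obtain ⟨d, rfl⟩ : ∃ d, v = u + 2 * d := ⟨(v - u) / 2, by ring⟩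
  have hd : 0 ≤ d := by linarith
  rw [show (u + (u + 2 * d)) / 2 - u = d by ring,
    show u + 2 * d - (u + (u + 2 * d)) / 2 = d by ring, show u + 2 * d - u = 2 * d by ring,
    ← two_mul, mul_div_assoc, mul_assoc,
    mul_rpow_mul_mul_rpow_eq hpq zero_le_two
      (div_nonneg (rpow_nonneg hd _) (by linarith [hpq.pos])) (by positivity),
    rpow_kernel_mul_rpow_eq hpq hd (by positivity) (by linarith)] at this
  exact this.trans_eq (by ring)

end Pieces

theorem stmt6_general (a b : ℝ) (hab : a < b) (f f' f'' : ℝ → ℝ)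
    (hf' : ∀ t ∈ Set.Icc a b, HasDerivAt f (f' t) t)
    (hf'' : ∀ t ∈ Set.Icc a b, HasDerivAt f' (f'' t) t)
    (hint : IntervalIntegrable f'' volume a b)
    (s : ℝ) (hs0 : 0 < s)
    (p q : ℝ) (hp : 1 < p) (hpq : 1 / p + 1 / q = 1)
    (hconv : SConvexOn s (Set.Icc a b) (fun t => |f'' t| ^ q)) :
    ∀ x ∈ Set.Icc a ((a + b) / 2),
      |((1 / (b - a)) * ∫ t in a..b, f t) - (1 / 2) * (f x + f (a + b - x))
          + (1 / 2) * (x - (3 * a + b) / 4) * (f' x - f' (a + b - x))|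
        ≤ 1 / (2 * (b - a) * (2 * p + 1) ^ (1 / p) * (s + 1) ^ (1 / q)) *
          ((x - a) ^ 3 * (|f'' a| ^ q + |f'' x| ^ q) ^ (1 / q)
            + (a + b - 2 * x) ^ 3 / 4 * (|f'' x| ^ q + |f'' (a + b - x)| ^ q) ^ (1 / q)
            + (x - a) ^ 3 * (|f'' (a + b - x)| ^ q + |f'' b| ^ q) ^ (1 / q)) := by
  rintro x ⟨hax, hxm⟩
  have hpq' : p.HolderConjugate q :=
    Real.holderConjugate_iff.2 ⟨hp, by simpa only [one_div] using hpq⟩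
  have ha : a ∈ Icc a b := left_mem_Icc.2 hab.le
  have hb : b ∈ Icc a b := right_mem_Icc.2 hab.le
  have hx : x ∈ Icc a b := ⟨hax, by linarith⟩
  have hy : a + b - x ∈ Icc a b := ⟨by linarith, by linarith⟩
  have hint' {u v} (hu : u ∈ Icc a b) (hv : v ∈ Icc a b) : IntervalIntegrable f'' volume u v :=
    hint.mono_set (uIcc_subset_uIcc (by rwa [uIcc_of_le hab.le]) (by rwa [uIcc_of_le hab.le]))
  have h₁ := abs_integral_sub_left_sq_mul_le hs0.le hpq' hconv ha hx hax (hint' ha hx)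
  have h₂ := abs_integral_sub_midpoint_sq_mul_le hs0.le hpq' hconv hx hy (by linarith)
    (hint' hx hy)
  have h₃ := abs_integral_sub_right_sq_mul_le hs0.le hpq' hconv hy hb (by linarith) (hint' hy hb)
  rw [show (x + (a + b - x)) / 2 = (a + b) / 2 by ring,
    show a + b - x - x = a + b - 2 * x by ring] at h₂
  rw [show b - (a + b - x) = x - a by ring] at h₃
  have hba : 0 < b - a := by linarith
  rw [three_point_kernel_identity hab hax hxm hf' hf'' hint, abs_mul,
    abs_of_pos (by positivity : 0 < 1 / (2 * (b - a)))]
  refine (mul_le_mul_of_nonneg_left ((abs_add_three _ _ _).trans (add_le_add_three h₁ h₂ h₃))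
    (by positivity)).trans_eq ?_
  field_simp

theorem stmt6 (a b : ℝ) (ha : 0 ≤ a) (hab : a < b) (f f' f'' : ℝ → ℝ)
    (hf' : ∀ t ∈ Set.Icc a b, HasDerivAt f (f' t) t)
    (hf'' : ∀ t ∈ Set.Icc a b, HasDerivAt f' (f'' t) t)
    (hint : IntervalIntegrable f'' volume a b)
    (s : ℝ) (hs0 : 0 < s) (hs1 : s ≤ 1)
    (p q : ℝ) (hp : 1 < p) (hq : 1 < q) (hpq : 1 / p + 1 / q = 1)
    (hconv : SConvexOn s (Set.Icc a b) (fun t => |f'' t| ^ q)) :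
    ∀ x ∈ Set.Icc a ((a + b) / 2),
      |((1 / (b - a)) * ∫ t in a..b, f t) - (1 / 2) * (f x + f (a + b - x))
          + (1 / 2) * (x - (3 * a + b) / 4) * (f' x - f' (a + b - x))|
        ≤ 1 / (2 * (b - a) * (2 * p + 1) ^ (1 / p) * (s + 1) ^ (1 / q)) *
          ((x - a) ^ 3 * (|f'' a| ^ q + |f'' x| ^ q) ^ (1 / q)
            + (a + b - 2 * x) ^ 3 / 4 * (|f'' x| ^ q + |f'' (a + b - x)| ^ q) ^ (1 / q)
            + (x - a) ^ 3 * (|f'' (a + b - x)| ^ q + |f'' b| ^ q) ^ (1 / q)) :=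
  stmt6_general a b hab f f' f'' hf' hf'' hint s hs0 p q hp hpq hconv
end

section
/- Let f : [a,b] → ℝ (a < b) be such that f′ is absolutely continuous on [a,b] and f″ ∈ L¹[a,b]. If |f″|^q is s-concave in the second sense on [a,b] for some fixed s ∈ (0,1], where q > 1 and 1/p + 1/q = 1, then for all x ∈ [a, (a+b)/2]: |(1/(b−a))∫_a^b f(t) dt − (1/2)[f(x)+f(a+b−x)] + (1/2)(x − (3a+b)/4)[f′(x) − f′(a+b−x)]| ≤ (2^{(s−1)/q}/(2(b−a)(2p+1)^{1/p}))[(x−a)³|f″((x+a)/2)| + ((a+b−2x)³/4)|f″((a+b)/2)| + (x−a)³|f″((a+2b−x)/2)|]. -/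
open MeasureTheory

def SConcaveOn (s : ℝ) (D : Set ℝ) (g : ℝ → ℝ) : Prop :=
  ∀ x ∈ D, ∀ y ∈ D, ∀ α β : ℝ, 0 ≤ α → 0 ≤ β → α + β = 1 →
    α ^ s * g x + β ^ s * g y ≤ g (α * x + β * y)

/-!
With the Peano kernel `K(t) = (t - a)²/2` on `[a, x]`, `(t - (a+b)/2)²/2` on `[x, a+b-x]` and
`(t - b)²/2` on `[a+b-x, b]`, two integrations by parts turn `(b - a)` times the left-hand side
into `∫ K f''`. On each of the three pieces `[u, v]`, Hölder's inequality bounds `∫ K |f''|` by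
`‖K‖_p ‖f''‖_q`, and s-concavity of `|f''|^q` applied to `t` and its reflection `u + v - t` gives
the Hermite–Hadamard type bound `∫_u^v |f''|^q ≤ 2^(s-1) (v - u) |f''((u+v)/2)|^q`. The `p`-norms of
the kernel pieces are explicit, and since `1/p + 1/q = 1` the powers of the lengths combine into
cubes.
-/

open Set intervalIntegral

namespace SConcaveOn

variable {s : ℝ} {g : ℝ → ℝ} {u v : ℝ}

theorem mono {D D' : Set ℝ} (h : SConcaveOn s D g) (hD : D' ⊆ D) : SConcaveOn s D' g :=
  fun x hx y hy α β hα hβ hαβ => h x (hD hx) y (hD hy) α β hα hβ hαβ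

theorem add_reflect_le (h : SConcaveOn s (Icc u v) g) {t : ℝ} (ht : t ∈ Icc u v) :
    g t + g (u + v - t) ≤ 2 ^ s * g ((u + v) / 2) := by
  have hrefl : u + v - t ∈ Icc u v := ⟨by linarith [ht.2], by linarith [ht.1]⟩
  have hmid := h t ht (u + v - t) hrefl (1 / 2) (1 / 2) (by norm_num) (by norm_num) (by norm_num)
  rw [show (1 / 2 : ℝ) * t + 1 / 2 * (u + v - t) = (u + v) / 2 by ring, ← mul_add,
    Real.div_rpow zero_le_one zero_le_two, Real.one_rpow, one_div_mul_eq_div,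
    div_le_iff₀ (by positivity)] at hmid
  linarith

theorem le_two_rpow_mul_midpoint (h : SConcaveOn s (Icc u v) g) (hg : ∀ t ∈ Icc u v, 0 ≤ g t)
    {t : ℝ} (ht : t ∈ Icc u v) : g t ≤ 2 ^ s * g ((u + v) / 2) := by
  have hrefl : u + v - t ∈ Icc u v := ⟨by linarith [ht.2], by linarith [ht.1]⟩
  linarith [h.add_reflect_le ht, hg _ hrefl]

theorem intervalIntegral_le (h : SConcaveOn s (Icc u v) g) (huv : u ≤ v)
    (hg : IntervalIntegrable g volume u v) :
    ∫ t in u..v, g t ≤ 2 ^ (s - 1) * (v - u) * g ((u + v) / 2) := by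
  have hg_refl : IntervalIntegrable (fun t => g (u + v - t)) volume u v := by
    simpa using (hg.comp_sub_left (u + v)).symm
  have hrefl : ∫ t in u..v, g (u + v - t) = ∫ t in u..v, g t := by
    rw [integral_comp_sub_left g (u + v)]; simp
  have hsum : ∫ t in u..v, (g t + g (u + v - t)) ≤ ∫ _ in u..v, 2 ^ s * g ((u + v) / 2) :=
    integral_mono_on huv (hg.add hg_refl) intervalIntegrable_const
      fun t ht => h.add_reflect_le ht
  rw [integral_add hg hg_refl, hrefl, intervalIntegral.integral_const, smul_eq_mul] at hsum
  rw [Real.rpow_sub_one two_ne_zero]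
  linarith

end SConcaveOn

theorem integral_half_sq_sub_mul_eq {f f' f'' : ℝ → ℝ} {u v : ℝ} (r : ℝ)
    (hf : ∀ t ∈ uIcc u v, HasDerivAt f (f' t) t) (hf' : ∀ t ∈ uIcc u v, HasDerivAt f' (f'' t) t)
    (hf'' : IntervalIntegrable f'' volume u v) :
    ∫ t in u..v, (t - r) ^ 2 / 2 * f'' t
      = (v - r) ^ 2 / 2 * f' v - (u - r) ^ 2 / 2 * f' u - ((v - r) * f v - (u - r) * f u)
        + ∫ t in u..v, f t := by
  have hf'_int : IntervalIntegrable f' volume u v :=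
    ContinuousOn.intervalIntegrable fun t ht => (hf' t ht).continuousAt.continuousWithinAt
  have hsq : ∀ t ∈ uIcc u v, HasDerivAt (fun t => (t - r) ^ 2 / 2) (t - r) t := fun t _ => by
    simpa using ((hasDerivAt_id t).sub_const r).pow 2 |>.div_const 2
  have hlin : ∀ t ∈ uIcc u v, HasDerivAt (fun t => t - r) 1 t := fun t _ => by
    simpa using (hasDerivAt_id t).sub_const r
  rw [integral_mul_deriv_eq_deriv_mul hsq hf'
      ((continuous_id.sub continuous_const).intervalIntegrable u v) hf'',
    integral_mul_deriv_eq_deriv_mul hlin hf intervalIntegrable_const hf'_int]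
  simp only [one_mul]
  ring

theorem integral_half_sq_rpow {p L : ℝ} (hp : 0 ≤ p) (hL : 0 ≤ L) :
    ∫ t in (0 : ℝ)..L, (t ^ 2 / 2) ^ p = L ^ (2 * p + 1) / ((2 * p + 1) * 2 ^ p) := by
  have hpow : ∀ t ∈ uIcc (0 : ℝ) L, (t ^ 2 / 2) ^ p = t ^ (2 * p) / 2 ^ p := fun t ht => by
    rw [uIcc_of_le hL] at ht
    rw [Real.div_rpow (sq_nonneg t) zero_le_two, ← Real.rpow_natCast, ← Real.rpow_mul ht.1]
    norm_num
  rw [integral_congr hpow, intervalIntegral.integral_div, integral_rpow (Or.inl (by linarith)),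
    Real.zero_rpow (by positivity), sub_zero, div_div]

theorem integral_half_sq_sub_rpow {p u v r : ℝ} (hp : 0 ≤ p) (hur : u ≤ r) (hrv : r ≤ v) :
    ∫ t in u..v, ((t - r) ^ 2 / 2) ^ p
      = ((r - u) ^ (2 * p + 1) + (v - r) ^ (2 * p + 1)) / ((2 * p + 1) * 2 ^ p) := by
  have hcont : Continuous fun t : ℝ => ((t - r) ^ 2 / 2) ^ p :=
    (Real.continuous_rpow_const hp).comp (by fun_prop)
  have hleft : ∫ t in u..r, ((t - r) ^ 2 / 2) ^ p = ∫ t in (0 : ℝ)..r - u, (t ^ 2 / 2) ^ p := by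
    simp_rw [← neg_sub r, neg_sq]
    simpa using integral_comp_sub_left (a := u) (b := r) (fun t => (t ^ 2 / 2) ^ p) r
  have hright : ∫ t in r..v, ((t - r) ^ 2 / 2) ^ p = ∫ t in (0 : ℝ)..v - r, (t ^ 2 / 2) ^ p := by
    simpa using integral_comp_sub_right (a := r) (b := v) (fun t => (t ^ 2 / 2) ^ p) r
  rw [← integral_add_adjacent_intervals (hcont.intervalIntegrable u r)
    (hcont.intervalIntegrable r v), hleft, hright, integral_half_sq_rpow hp (by linarith),
    integral_half_sq_rpow hp (by linarith), add_div]

theorem integral_mul_abs_le_Lp_mul_Lq {p q u v : ℝ} {w g : ℝ → ℝ} (hpq : p.HolderConjugate q)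
    (huv : u ≤ v) (hw : ContinuousOn w (Icc u v)) (hw0 : ∀ t ∈ Icc u v, 0 ≤ w t)
    (hg : IntervalIntegrable g volume u v)
    (hgq : IntervalIntegrable (fun t => |g t| ^ q) volume u v) :
    ∫ t in u..v, w t * |g t|
      ≤ (∫ t in u..v, w t ^ p) ^ (1 / p) * (∫ t in u..v, |g t| ^ q) ^ (1 / q) := by
  set μ := volume.restrict (Ioc u v)
  have hIcc : ∀ᵐ t ∂μ, t ∈ Icc u v :=
    (ae_restrict_mem measurableSet_Ioc).mono fun t ht => Ioc_subset_Icc_self ht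
  have hw_mem : MemLp w (ENNReal.ofReal p) μ := by
    obtain ⟨C, hC⟩ := isCompact_Icc.exists_bound_of_continuousOn hw
    exact MemLp.of_bound ((hw.mono Ioc_subset_Icc_self).aestronglyMeasurable measurableSet_Ioc) C
      (hIcc.mono hC)
  have hg_mem : MemLp (fun t => |g t|) (ENNReal.ofReal q) μ := by
    refine (integrable_norm_rpow_iff hg.1.aestronglyMeasurable.norm
      (by simpa using hpq.symm.pos) ENNReal.ofReal_ne_top).1 ?_
    simpa [μ, ENNReal.toReal_ofReal hpq.symm.nonneg, IntegrableOn] using hgq.1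
  simpa only [μ, ← integral_of_le huv] using integral_mul_le_Lp_mul_Lq_of_nonneg hpq
    (hIcc.mono hw0) (Filter.Eventually.of_forall fun t => abs_nonneg (g t)) hw_mem hg_mem

theorem abs_integral_mul_le_of_sConcaveOn {p q s u v : ℝ} {w g : ℝ → ℝ}
    (hpq : p.HolderConjugate q) (huv : u ≤ v) (hw : ContinuousOn w (Icc u v))
    (hw0 : ∀ t ∈ Icc u v, 0 ≤ w t) (hg : IntervalIntegrable g volume u v)
    (hconc : SConcaveOn s (Icc u v) fun t => |g t| ^ q) :
    |∫ t in u..v, w t * g t|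
      ≤ (∫ t in u..v, w t ^ p) ^ (1 / p) * (2 ^ (s - 1) * (v - u)) ^ (1 / q)
        * |g ((u + v) / 2)| := by
  have hq := hpq.symm.pos
  have hgq : IntervalIntegrable (fun t => |g t| ^ q) volume u v := by
    rw [intervalIntegrable_iff_integrableOn_Ioc_of_le huv]
    refine (integrable_const (2 ^ s * |g ((u + v) / 2)| ^ q)).mono'
      ((Real.continuous_rpow_const hq.le).comp_aestronglyMeasurable
        hg.1.aestronglyMeasurable.norm) ?_
    filter_upwards [ae_restrict_mem measurableSet_Ioc] with t ht
    rw [Real.norm_of_nonneg (by positivity)]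
    exact hconc.le_two_rpow_mul_midpoint (fun t _ => by positivity) (Ioc_subset_Icc_self ht)
  have hhadamard : ∫ t in u..v, |g t| ^ q ≤ 2 ^ (s - 1) * (v - u) * |g ((u + v) / 2)| ^ q :=
    hconc.intervalIntegral_le huv hgq
  have hwp : 0 ≤ (∫ t in u..v, w t ^ p) ^ (1 / p) :=
    Real.rpow_nonneg (integral_nonneg huv fun t ht => Real.rpow_nonneg (hw0 t ht) p) _
  calc |∫ t in u..v, w t * g t|
      ≤ ∫ t in u..v, w t * |g t| := by
        refine (abs_integral_le_integral_abs huv).trans_eq (integral_congr fun t ht => ?_)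
        rw [uIcc_of_le huv] at ht
        simp only [abs_mul, abs_of_nonneg (hw0 t ht)]
    _ ≤ (∫ t in u..v, w t ^ p) ^ (1 / p) * (∫ t in u..v, |g t| ^ q) ^ (1 / q) :=
        integral_mul_abs_le_Lp_mul_Lq hpq huv hw hw0 hg hgq
    _ ≤ (∫ t in u..v, w t ^ p) ^ (1 / p)
          * (2 ^ (s - 1) * (v - u) * |g ((u + v) / 2)| ^ q) ^ (1 / q) := by
        refine mul_le_mul_of_nonneg_left (Real.rpow_le_rpow ?_ hhadamard (by positivity)) hwp
        exact integral_nonneg huv fun t _ => by positivity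
    _ = _ := by
        rw [Real.mul_rpow (mul_nonneg (by positivity) (sub_nonneg.2 huv)) (by positivity),
          one_div q, Real.rpow_rpow_inv (abs_nonneg _) hq.ne', mul_assoc]

theorem half_sq_kernel_bound_eq {p q s L : ℝ} (hpq : p.HolderConjugate q) (hL : 0 ≤ L) :
    (L ^ (2 * p + 1) / ((2 * p + 1) * 2 ^ p)) ^ (1 / p) * (2 ^ (s - 1) * L) ^ (1 / q)
      = 2 ^ ((s - 1) / q) / (2 * (2 * p + 1) ^ (1 / p)) * L ^ 3 := by
  have hp := hpq.pos
  have hexp : (2 * p + 1) / p + 1 / q = 3 := by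
    have := hpq.inv_add_inv_eq_one
    field_simp at this ⊢
    linarith
  have hL3 : L ^ ((2 * p + 1) / p) * L ^ (1 / q) = L ^ 3 := by
    rw [← Real.rpow_add' hL (by rw [hexp]; norm_num), hexp]
    norm_cast
  rw [Real.div_rpow (by positivity) (by positivity), Real.mul_rpow (by positivity) (by positivity),
    ← Real.rpow_mul hL, ← Real.rpow_mul zero_le_two, mul_one_div_cancel hp.ne', Real.rpow_one,
    Real.mul_rpow (by positivity) hL, ← Real.rpow_mul zero_le_two, mul_one_div, mul_one_div, ← hL3]
  ring

theorem abs_integral_half_sq_sub_endpoint_mul_le {p q s u v r : ℝ} {g : ℝ → ℝ}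
    (hpq : p.HolderConjugate q) (huv : u ≤ v) (hr : r = u ∨ r = v)
    (hg : IntervalIntegrable g volume u v) (hconc : SConcaveOn s (Icc u v) fun t => |g t| ^ q) :
    |∫ t in u..v, (t - r) ^ 2 / 2 * g t|
      ≤ 2 ^ ((s - 1) / q) / (2 * (2 * p + 1) ^ (1 / p)) * ((v - u) ^ 3 * |g ((u + v) / 2)|) := by
  have hkernel :
      ∫ t in u..v, ((t - r) ^ 2 / 2) ^ p = (v - u) ^ (2 * p + 1) / ((2 * p + 1) * 2 ^ p) := by
    have hp := hpq.pos
    rcases hr with rfl | rfl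
    · rw [integral_half_sq_sub_rpow hp.le le_rfl huv, sub_self, Real.zero_rpow (by positivity),
        zero_add]
    · rw [integral_half_sq_sub_rpow hp.le huv le_rfl, sub_self, Real.zero_rpow (by positivity),
        add_zero]
  calc |∫ t in u..v, (t - r) ^ 2 / 2 * g t|
      ≤ (∫ t in u..v, ((t - r) ^ 2 / 2) ^ p) ^ (1 / p) * (2 ^ (s - 1) * (v - u)) ^ (1 / q)
        * |g ((u + v) / 2)| :=
        abs_integral_mul_le_of_sConcaveOn hpq huv (by fun_prop) (fun t _ => by positivity) hg hconc
    _ = _ := by rw [hkernel, half_sq_kernel_bound_eq hpq (sub_nonneg.2 huv), mul_assoc]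

theorem abs_integral_half_sq_sub_midpoint_mul_le {p q s u v : ℝ} {g : ℝ → ℝ}
    (hpq : p.HolderConjugate q) (huv : u ≤ v)
    (hg : IntervalIntegrable g volume u v) (hconc : SConcaveOn s (Icc u v) fun t => |g t| ^ q) :
    |∫ t in u..v, (t - (u + v) / 2) ^ 2 / 2 * g t|
      ≤ 2 ^ ((s - 1) / q) / (2 * (2 * p + 1) ^ (1 / p))
        * ((v - u) ^ 3 / 4 * |g ((u + v) / 2)|) := by
  have hp := hpq.pos
  have hL : 0 ≤ (v - u) / 2 := by linarith
  have hkernel : ∫ t in u..v, ((t - (u + v) / 2) ^ 2 / 2) ^ p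
      = 2 * (((v - u) / 2) ^ (2 * p + 1) / ((2 * p + 1) * 2 ^ p)) := by
    rw [integral_half_sq_sub_rpow hp.le (by linarith) (by linarith),
      show (u + v) / 2 - u = (v - u) / 2 by ring, show v - (u + v) / 2 = (v - u) / 2 by ring]
    ring
  have htwo : (2 : ℝ) ^ (1 / p) * 2 ^ (1 / q) = 2 := by
    rw [← Real.rpow_add zero_lt_two, one_div, one_div, hpq.inv_add_inv_eq_one, Real.rpow_one]
  calc |∫ t in u..v, (t - (u + v) / 2) ^ 2 / 2 * g t|
      ≤ (∫ t in u..v, ((t - (u + v) / 2) ^ 2 / 2) ^ p) ^ (1 / p)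
        * (2 ^ (s - 1) * (v - u)) ^ (1 / q) * |g ((u + v) / 2)| :=
        abs_integral_mul_le_of_sConcaveOn hpq huv (by fun_prop) (fun t _ => by positivity) hg hconc
    _ = 2 ^ (1 / p) * 2 ^ (1 / q) * ((((v - u) / 2) ^ (2 * p + 1) / ((2 * p + 1) * 2 ^ p)) ^ (1 / p)
          * (2 ^ (s - 1) * ((v - u) / 2)) ^ (1 / q)) * |g ((u + v) / 2)| := by
        rw [hkernel, Real.mul_rpow zero_le_two (by positivity),
          show 2 ^ (s - 1) * (v - u) = 2 * (2 ^ (s - 1) * ((v - u) / 2)) by ring,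
          Real.mul_rpow zero_le_two (by positivity)]
        ring
    _ = _ := by rw [htwo, half_sq_kernel_bound_eq hpq hL]; ring

theorem quadrature_error_eq_kernel_integrals {a b x : ℝ} {f f' f'' : ℝ → ℝ} (hab : a < b)
    (hx : x ∈ Icc a b) (hf : ∀ t ∈ Icc a b, HasDerivAt f (f' t) t)
    (hf' : ∀ t ∈ Icc a b, HasDerivAt f' (f'' t) t) (hf'' : IntervalIntegrable f'' volume a b) :
    (1 / (b - a)) * (∫ t in a..b, f t) - (1 / 2) * (f x + f (a + b - x))
        + (1 / 2) * (x - (3 * a + b) / 4) * (f' x - f' (a + b - x))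
      = ((∫ t in a..x, (t - a) ^ 2 / 2 * f'' t)
          + (∫ t in x..a + b - x, (t - (a + b) / 2) ^ 2 / 2 * f'' t)
          + ∫ t in a + b - x..b, (t - b) ^ 2 / 2 * f'' t) / (b - a) := by
  have ha : a ∈ Icc a b := left_mem_Icc.2 hab.le
  have hb : b ∈ Icc a b := right_mem_Icc.2 hab.le
  have hy : a + b - x ∈ Icc a b := ⟨by linarith [hx.2], by linarith [hx.1]⟩
  have hba : b - a ≠ 0 := sub_ne_zero.2 hab.ne'
  have parts : ∀ {u v : ℝ} (r : ℝ), u ∈ Icc a b → v ∈ Icc a b →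
      ∫ t in u..v, (t - r) ^ 2 / 2 * f'' t
        = (v - r) ^ 2 / 2 * f' v - (u - r) ^ 2 / 2 * f' u - ((v - r) * f v - (u - r) * f u)
          + ∫ t in u..v, f t := fun r hu hv =>
    integral_half_sq_sub_mul_eq r (fun t ht => hf t (uIcc_subset_Icc hu hv ht))
      (fun t ht => hf' t (uIcc_subset_Icc hu hv ht))
      (hf''.mono_set (by rw [uIcc_of_le hab.le]; exact uIcc_subset_Icc hu hv))
  have hf_int : ∀ {u v : ℝ}, u ∈ Icc a b → v ∈ Icc a b → IntervalIntegrable f volume u v :=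
    fun hu hv => ContinuousOn.intervalIntegrable fun t ht =>
      (hf t (uIcc_subset_Icc hu hv ht)).continuousAt.continuousWithinAt
  rw [parts a ha hx, parts _ hx hy, parts b hy hb,
    ← integral_add_adjacent_intervals (hf_int ha hx) (hf_int hx hb),
    ← integral_add_adjacent_intervals (hf_int hx hy) (hf_int hy hb)]
  field_simp
  ring

theorem stmt12_general (a b : ℝ) (hab : a < b) (f f' f'' : ℝ → ℝ)
    (hf' : ∀ t ∈ Set.Icc a b, HasDerivAt f (f' t) t)
    (hf'' : ∀ t ∈ Set.Icc a b, HasDerivAt f' (f'' t) t)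
    (hint : IntervalIntegrable f'' volume a b)
    (s : ℝ)
    (p q : ℝ) (hp : 1 < p) (hpq : 1 / p + 1 / q = 1)
    (hconc : SConcaveOn s (Set.Icc a b) (fun t => |f'' t| ^ q)) :
    ∀ x ∈ Set.Icc a ((a + b) / 2),
      |((1 / (b - a)) * ∫ t in a..b, f t) - (1 / 2) * (f x + f (a + b - x))
          + (1 / 2) * (x - (3 * a + b) / 4) * (f' x - f' (a + b - x))|
        ≤ (2 : ℝ) ^ ((s - 1) / q) / (2 * (b - a) * (2 * p + 1) ^ (1 / p)) *
          ((x - a) ^ 3 * |f'' ((x + a) / 2)|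
            + (a + b - 2 * x) ^ 3 / 4 * |f'' ((a + b) / 2)|
            + (x - a) ^ 3 * |f'' ((a + 2 * b - x) / 2)|) := by
  rintro x ⟨hax, hxm⟩
  have hpq' : p.HolderConjugate q :=
    Real.holderConjugate_iff.2 ⟨hp, by simpa only [one_div] using hpq⟩
  have ha : a ∈ Icc a b := left_mem_Icc.2 hab.le
  have hb : b ∈ Icc a b := right_mem_Icc.2 hab.le
  have hx : x ∈ Icc a b := ⟨hax, by linarith⟩
  have hy : a + b - x ∈ Icc a b := ⟨by linarith, by linarith⟩
  have hint_sub : ∀ {u v : ℝ}, u ∈ Icc a b → v ∈ Icc a b → IntervalIntegrable f'' volume u v :=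
    fun hu hv => hint.mono_set (by rw [uIcc_of_le hab.le]; exact uIcc_subset_Icc hu hv)
  have hconc_sub : ∀ {u v : ℝ}, u ∈ Icc a b → v ∈ Icc a b →
      SConcaveOn s (Icc u v) fun t => |f'' t| ^ q :=
    fun hu hv => hconc.mono (Icc_subset_Icc hu.1 hv.2)
  have h1 := abs_integral_half_sq_sub_endpoint_mul_le hpq' hax (Or.inl rfl)
    (hint_sub ha hx) (hconc_sub ha hx)
  have h2 := abs_integral_half_sq_sub_midpoint_mul_le hpq' (by linarith : x ≤ a + b - x)
    (hint_sub hx hy) (hconc_sub hx hy)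
  have h3 := abs_integral_half_sq_sub_endpoint_mul_le hpq' hy.2 (Or.inr rfl)
    (hint_sub hy hb) (hconc_sub hy hb)
  rw [add_comm a x] at h1
  rw [show x + (a + b - x) = a + b by ring, show a + b - x - x = a + b - 2 * x by ring] at h2
  rw [show a + b - x + b = a + 2 * b - x by ring, show b - (a + b - x) = x - a by ring] at h3
  rw [quadrature_error_eq_kernel_integrals hab hx hf' hf'' hint, abs_div,
    abs_of_pos (sub_pos.2 hab)]
  refine (div_le_div_of_nonneg_right ((abs_add_three _ _ _).trans
    (add_le_add (add_le_add h1 h2) h3)) (sub_pos.2 hab).le).trans_eq ?_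
  field_simp

theorem stmt12 (a b : ℝ) (ha : 0 ≤ a) (hab : a < b) (f f' f'' : ℝ → ℝ)
    (hf' : ∀ t ∈ Set.Icc a b, HasDerivAt f (f' t) t)
    (hf'' : ∀ t ∈ Set.Icc a b, HasDerivAt f' (f'' t) t)
    (hint : IntervalIntegrable f'' volume a b)
    (s : ℝ) (hs0 : 0 < s) (hs1 : s ≤ 1)
    (p q : ℝ) (hp : 1 < p) (hq : 1 < q) (hpq : 1 / p + 1 / q = 1)
    (hconc : SConcaveOn s (Set.Icc a b) (fun t => |f'' t| ^ q)) :
    ∀ x ∈ Set.Icc a ((a + b) / 2),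
      |((1 / (b - a)) * ∫ t in a..b, f t) - (1 / 2) * (f x + f (a + b - x))
          + (1 / 2) * (x - (3 * a + b) / 4) * (f' x - f' (a + b - x))|
        ≤ (2 : ℝ) ^ ((s - 1) / q) / (2 * (b - a) * (2 * p + 1) ^ (1 / p)) *
          ((x - a) ^ 3 * |f'' ((x + a) / 2)|
            + (a + b - 2 * x) ^ 3 / 4 * |f'' ((a + b) / 2)|
            + (x - a) ^ 3 * |f'' ((a + 2 * b - x) / 2)|) :=
  stmt12_general a b hab f f' f'' hf' hf'' hint s p q hp hpq hconc
end
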